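/- arXiv:1906.10537 — 3 statements merged into one kernel-verified Lean document; each statement's English description precedes it below -/
import Mathlib

section
/- For every real number a > 5, every integer n ≥ 1, and every k with 1 ≤ k ≤ n+1, the n×n matrix E_n^k(a,1), obtained by deleting the k-th row of E_n(a,1), is invertible; that is, all order-n minors of E_n(a,1) are nonzero. -/
/-- The `(n+1) × n` matrix `E_n(a,1)`. -/
def Emat (n : ℕ) (a : ℝ) : Matrix (Fin (n + 1)) (Fin n) ℝ :=
  Matrix.of fun i j =>
    if (i : ℕ) = (j : ℕ) then -a
    else if (i : ℕ) + 1 = (j : ℕ) then 1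
    else if (i : ℕ) = (j : ℕ) + 1 then a
    else if (i : ℕ) = (j : ℕ) + 2 then -1
    else 0

/-- `E_n^k(a,1)`: the `n × n` matrix obtained from `E_n(a,1)` by deleting the
`k`-th row (rows of `E_n(a,1)` being counted `1,…,n+1`). -/
def Ek (n : ℕ) (a : ℝ) (k : ℕ) : Matrix (Fin n) (Fin n) ℝ :=
  Matrix.of fun i j =>
    Emat n a (if (i : ℕ) + 1 < k then i.castSucc else i.succ) j

/-!
Let `v` be a kernel vector of `E_n^k(a,1)` and `X` the sequence carrying `v` in positions
`2, …, n+1` and zeros elsewhere. Row `r` of `E_n(a,1) v` is `X(r+3) - a X(r+2) + a X(r+1) - X r`,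
so the differences `Y t = X(t+1) - X t` satisfy `Y(r+2) = (a-1) Y(r+1) - Y r` at every row `r`
except the deleted row `d`; moreover `Y 0 = Y(n+2) = 0`, and `∑ Y = 0` by telescoping.

Solving the recurrence from both ends gives `Y t = Y 1 · U t` for `t ≤ d+1` and
`Y t = Y(n+1) · U(n+2-t)` for `t ≥ d+1`, where `U` is the Lucas sequence of `(a-1, 1)`, which is
positive (it grows at least linearly) as soon as `a ≥ 3`. Comparing the two expressions at `d+1`
shows that `Y 1` and `Y(n+1)` have the same sign, hence so do all `Y t`. Since they sum to zero,
`Y = 0`, so `X = 0` and `v = 0`.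
-/

open Finset Matrix

noncomputable def lucasU (b : ℝ) : ℕ → ℝ
  | 0 => 0
  | 1 => 1
  | i + 2 => b * lucasU b (i + 1) - lucasU b i

section Recurrence

variable {b : ℝ}

lemma natCast_le_lucasU (hb : 2 ≤ b) (i : ℕ) : (i : ℝ) ≤ lucasU b i := by
  have key : ∀ i : ℕ, (i : ℝ) ≤ lucasU b i ∧ lucasU b i + 1 ≤ lucasU b (i + 1) := by
    intro i
    induction i with
    | zero => simp [lucasU]
    | succ i ih =>
      refine ⟨by push_cast; linarith [ih.1, ih.2], ?_⟩
      rw [lucasU]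
      nlinarith [ih.1, ih.2]
  exact (key i).1

lemma lucasU_nonneg (hb : 2 ≤ b) (i : ℕ) : 0 ≤ lucasU b i :=
  (Nat.cast_nonneg i).trans (natCast_le_lucasU hb i)

lemma lucasU_succ_pos (hb : 2 ≤ b) (i : ℕ) : 0 < lucasU b (i + 1) :=
  (Nat.cast_add_one_pos i).trans_le (by exact_mod_cast natCast_le_lucasU hb (i + 1))

lemma eq_mul_lucasU {Z : ℕ → ℝ} {m : ℕ} (h0 : Z 0 = 0)
    (hrec : ∀ r < m, Z (r + 2) = b * Z (r + 1) - Z r) :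
    ∀ i ≤ m + 1, Z i = Z 1 * lucasU b i := by
  have key : ∀ i ≤ m, Z i = Z 1 * lucasU b i ∧ Z (i + 1) = Z 1 * lucasU b (i + 1) := by
    intro i hi
    induction i with
    | zero => simp [lucasU, h0]
    | succ i ih =>
      obtain ⟨h1, h2⟩ := ih (by omega)
      refine ⟨h2, ?_⟩
      rw [hrec i (by omega), h1, h2, lucasU]
      ring
  rintro (_ | i) hi
  · exact (key 0 (Nat.zero_le _)).1
  · exact (key i (by omega)).2

lemma eq_mul_lucasU_rev {Y : ℕ → ℝ} {n d : ℕ} (hlast : Y (n + 2) = 0)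
    (hrec : ∀ r ≤ n, d < r → Y (r + 2) = b * Y (r + 1) - Y r) :
    ∀ t, d + 1 ≤ t → t ≤ n + 2 → Y t = Y (n + 1) * lucasU b (n + 2 - t) := by
  have h := eq_mul_lucasU (Z := fun s => Y (n + 2 - s)) (m := n - d) (b := b)
    (by simpa using hlast) fun s hs => by
      have := hrec (n - s) (by omega) (by omega)
      rw [show n - s + 2 = n + 2 - s by omega, show n - s + 1 = n + 2 - (s + 1) by omega] at this
      simp only [show n + 2 - (s + 2) = n - s by omega]
      linarith
  intro t ht1 ht2
  simpa [show n + 2 - (n + 2 - t) = t by omega] using h (n + 2 - t) (by omega)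

lemma eq_zero_of_recurrence_except_one (hb : 2 ≤ b) {Y : ℕ → ℝ} {n d : ℕ} (hd : d ≤ n)
    (h0 : Y 0 = 0) (hlast : Y (n + 2) = 0)
    (hrec : ∀ r ≤ n, r ≠ d → Y (r + 2) = b * Y (r + 1) - Y r)
    (hsum : ∑ t ∈ range (n + 2), Y t = 0) :
    ∀ t ≤ n + 2, Y t = 0 := by
  have hbelow : ∀ t ≤ d + 1, Y t = Y 1 * lucasU b t :=
    eq_mul_lucasU h0 fun r hr => hrec r (by omega) (by omega)
  have habove : ∀ t, d + 1 ≤ t → t ≤ n + 2 → Y t = Y (n + 1) * lucasU b (n + 2 - t) :=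
    eq_mul_lucasU_rev hlast fun r hr hdr => hrec r hr (by omega)
  have hmatch : Y 1 * lucasU b (d + 1) = Y (n + 1) * lucasU b (n - d + 1) := by
    rw [← hbelow (d + 1) le_rfl, habove (d + 1) le_rfl (by omega)]
    congr 2
    omega
  have hsign : 0 ≤ Y 1 * Y (n + 1) := by
    refine nonneg_of_mul_nonneg_left ?_ (lucasU_succ_pos hb (n - d))
    rw [mul_assoc, ← hmatch, ← mul_assoc]
    exact mul_nonneg (mul_self_nonneg _) (lucasU_nonneg hb _)
  have hterm : ∀ t ∈ range (n + 2), 0 ≤ Y 1 * Y t := by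
    intro t ht
    rcases le_total t (d + 1) with h | h
    · rw [hbelow t h, ← mul_assoc]
      exact mul_nonneg (mul_self_nonneg _) (lucasU_nonneg hb _)
    · rw [habove t h (by simp at ht; omega), ← mul_assoc]
      exact mul_nonneg hsign (lucasU_nonneg hb _)
  have hY1 : Y 1 = 0 := by
    have := (sum_eq_zero_iff_of_nonneg hterm).1 (by rw [← mul_sum, hsum, mul_zero]) 1 (by simp)
    exact mul_self_eq_zero.1 this
  have hYn : Y (n + 1) = 0 := by
    rw [hY1, zero_mul] at hmatch
    exact (mul_eq_zero.1 hmatch.symm).resolve_right (lucasU_succ_pos hb _).ne'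
  intro t ht
  rcases le_total t (d + 1) with h | h
  · rw [hbelow t h, hY1, zero_mul]
  · rw [habove t h ht, hYn, zero_mul]

end Recurrence

section Kernel

variable {n : ℕ}

-- The offset 2 keeps every index in `Emat_mulVec_apply` free of truncated subtraction.
noncomputable def padSeq (v : Fin n → ℝ) (t : ℕ) : ℝ :=
  ∑ j : Fin n, if (j : ℕ) + 2 = t then v j else 0

lemma padSeq_add_two (v : Fin n → ℝ) (j : Fin n) : padSeq v (j + 2) = v j := by
  simp [padSeq, Fin.val_inj]

lemma padSeq_of_lt_two (v : Fin n → ℝ) {t : ℕ} (ht : t < 2) : padSeq v t = 0 :=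
  sum_eq_zero fun j _ => if_neg (by omega)

lemma padSeq_of_le (v : Fin n → ℝ) {t : ℕ} (ht : n + 2 ≤ t) : padSeq v t = 0 :=
  sum_eq_zero fun j _ => if_neg (by omega)

lemma Emat_mulVec_apply (a : ℝ) (v : Fin n → ℝ) (r : Fin (n + 1)) :
    (Emat n a *ᵥ v) r =
      padSeq v (r + 3) - a * padSeq v (r + 2) + a * padSeq v (r + 1) - padSeq v r := by
  simp only [padSeq, mulVec, dotProduct, mul_sum, ← sum_sub_distrib, ← sum_add_distrib]
  refine sum_congr rfl fun j _ => ?_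
  simp only [Emat, of_apply]
  split_ifs <;> first | (exfalso; omega) | ring1

theorem det_submatrix_Emat_succAbove_ne_zero {a : ℝ} (ha : 3 ≤ a) (d : Fin (n + 1)) :
    ((Emat n a).submatrix d.succAbove id).det ≠ 0 := by
  intro hdet
  obtain ⟨v, hv, hker⟩ := exists_mulVec_eq_zero_iff.2 hdet
  set X := padSeq v
  have hrow : ∀ r : Fin (n + 1), r ≠ d → (Emat n a *ᵥ v) r = 0 := by
    intro r hr
    obtain ⟨i, rfl⟩ := Fin.exists_succAbove_eq hr
    simpa [mulVec, dotProduct] using congrFun hker i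
  have hY : ∀ t ≤ n + 2, X (t + 1) - X t = 0 := by
    refine eq_zero_of_recurrence_except_one (b := a - 1) (by linarith) d.is_le ?_ ?_ ?_ ?_
    · simp [X, padSeq_of_lt_two]
    · simp [X, padSeq_of_le]
    · intro r hr hrd
      have := hrow ⟨r, by omega⟩ fun h => hrd (congrArg Fin.val h)
      rw [Emat_mulVec_apply] at this
      linarith
    · rw [sum_range_sub]
      simp [X, padSeq_of_le, padSeq_of_lt_two]
  have hX : ∀ t ≤ n + 2, X t = 0 := by
    intro t
    induction t with
    | zero => exact fun _ => padSeq_of_lt_two v (by norm_num)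
    | succ t ih => intro ht; linarith [hY t (by omega), ih (by omega)]
  exact hv (funext fun j => by rw [Pi.zero_apply, ← padSeq_add_two v j]; exact hX _ (by omega))

end Kernel

-- `Ek` counts rows from 1; a `k` outside `1, …, n+1` deletes the first or the last row.
theorem Ek_eq_submatrix (n : ℕ) (a : ℝ) (k : ℕ) :
    Ek n a k = (Emat n a).submatrix (Fin.succAbove ⟨min (k - 1) n, by omega⟩) id := by
  ext i j
  simp only [Ek, of_apply, submatrix_apply, id, Fin.succAbove, Fin.lt_def, Fin.val_castSucc]
  congr 2
  apply propext
  omega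

theorem stmt8_general (a : ℝ) (ha : 5 < a) (n : ℕ)
    (k : ℕ) :
    IsUnit (Ek n a k) ∧ (Ek n a k).det ≠ 0 := by
  have hdet : (Ek n a k).det ≠ 0 := by
    rw [Ek_eq_submatrix]
    exact det_submatrix_Emat_succAbove_ne_zero (by linarith) _
  exact ⟨(isUnit_iff_isUnit_det _).2 hdet.isUnit, hdet⟩

theorem stmt8 (a : ℝ) (ha : 5 < a) (n : ℕ) (hn : 1 ≤ n)
    (k : ℕ) (hk1 : 1 ≤ k) (hk2 : k ≤ n + 1) :
    IsUnit (Ek n a k) ∧ (Ek n a k).det ≠ 0 :=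
  stmt8_general a ha n k
end

section
/- Let m, n be natural numbers with m ≥ 4 and n ≥ 4, and let a be a real number with |a| ≥ 2. Let 𝒮 ⊆ M_{m×n}(ℂ) be the complex linear span of the matrices S_{i,j}, for 1 ≤ i ≤ m−2 and 1 ≤ j ≤ n−2, where S_{i,j} is the m×n matrix whose only nonzero entries are: entry (i−1, j+1) equal to 1, entry (i, j) equal to a, and entry (i+1, j−1) equal to 1 (rows indexed 0,…,m−1, columns indexed 0,…,n−1). Then every nonzero matrix in 𝒮 has rank at least 3, and the dimension of 𝒮 over ℂ equals (m−2)(n−2). -/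
/-- The generator matrix `S_{i,j}` (rows indexed `0,…,m-1`, columns `0,…,n-1`):
its only nonzero entries are `(i-1, j+1) ↦ 1`, `(i, j) ↦ a`, `(i+1, j-1) ↦ 1`. -/
def Sgen (m n : ℕ) (a : ℝ) (i j : ℕ) : Matrix (Fin m) (Fin n) ℂ :=
  Matrix.of fun r c =>
    if (r : ℕ) = i - 1 ∧ (c : ℕ) = j + 1 then 1
    else if (r : ℕ) = i ∧ (c : ℕ) = j then (a : ℂ)
    else if (r : ℕ) = i + 1 ∧ (c : ℕ) = j - 1 then 1
    else 0

/-!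
Write `M = ∑ C (i, j) • S_{i,j}`. Let `i + j = d` be the first anti-diagonal meeting the support
of `C`, and `t k = C (k, d - k)`, supported between `s` and `e`. Then `M` vanishes above its
anti-diagonal `u + w = d`, on which its entries are `t (k + 1) + a t k + t (k - 1)`. At `k = s - 1`
and `k = e + 1` these reduce to `t s ≠ 0` and `t e ≠ 0`; for `s ≤ k ≤ e` they cannot all vanish,
because with `|a| ≥ 2` the recurrence makes `k ↦ ‖t k‖` convex, so `t` could not return to `0`.
Three nonzero entries on the first nonzero anti-diagonal give a triangular `3 × 3` minor, so
`rank M ≥ 3`; in particular `M ≠ 0`, so the `S_{i,j}` are linearly independent.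
-/

section ThreeTermRecurrence

variable {𝕜 E : Type*} [NormedField 𝕜] [NormedAddCommGroup E] [NormedSpace 𝕜 E] {a : 𝕜}

lemma norm_sub_norm_le_of_add_smul_add_eq_zero (ha : 2 ≤ ‖a‖) {x y z : E}
    (h : z + a • y + x = 0) : ‖y‖ - ‖x‖ ≤ ‖z‖ - ‖y‖ := by
  have hay : a • y = -(z + x) := by rw [eq_neg_iff_add_eq_zero, ← h]; abel
  have : ‖a‖ * ‖y‖ ≤ ‖z‖ + ‖x‖ := by
    rw [← norm_smul, hay, norm_neg]
    exact norm_add_le z x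
  nlinarith [norm_nonneg y]

theorem exists_add_smul_add_ne_zero (ha : 2 ≤ ‖a‖) {t : ℤ → E} {s e : ℤ} (hse : s ≤ e)
    (hs₀ : t (s - 1) = 0) (hs : t s ≠ 0) (he : t (e + 1) = 0) :
    ∃ k, s ≤ k ∧ k ≤ e ∧ t (k + 1) + a • t k + t (k - 1) ≠ 0 := by
  by_contra! hrec
  have hgrowth : ∀ k, s ≤ k → k ≤ e + 1 → ‖t s‖ ≤ ‖t k‖ - ‖t (k - 1)‖ := by
    intro k hk
    induction k, hk using Int.leInduction with
    | base => simp [hs₀]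
    | succ k hk ih =>
      intro hke
      have := norm_sub_norm_le_of_add_smul_add_eq_zero ha (hrec k hk (by omega))
      rw [add_sub_cancel_right]
      linarith [ih (by omega)]
  have := hgrowth (e + 1) (by omega) le_rfl
  rw [he, add_sub_cancel_right, norm_zero] at this
  linarith [norm_pos_iff.mpr hs, norm_nonneg (t e)]

end ThreeTermRecurrence

section Rank

variable {K ι κ ι' : Type*} [Field K] [Fintype κ] [Fintype ι'] [LinearOrder ι'] [DecidableEq ι']

theorem Matrix.card_le_rank_of_isLowerTriangular_submatrix (M : Matrix ι κ K) (f : ι' → ι)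
    (g : ι' → κ) (hM : (M.submatrix f g).IsLowerTriangular) (hdiag : ∀ i, M (f i) (g i) ≠ 0) :
    Fintype.card ι' ≤ M.rank := by
  have hdet : (M.submatrix f g).det ≠ 0 := by
    rw [Matrix.det_of_isLowerTriangular _ hM]
    exact Finset.prod_ne_zero_iff.mpr fun i _ => hdiag i
  rw [← Matrix.rank_of_det_ne_zero hdet]
  exact Matrix.rank_submatrix_le M f g

theorem Matrix.le_rank_of_antidiagonal {m n k : ℕ} {E : ℤ → ℤ → K} {d : ℤ} {ρ : Fin k → ℤ}
    (hρ : StrictMono ρ) (hrow : ∀ i, 0 ≤ ρ i ∧ ρ i < m) (hcol : ∀ i, 0 ≤ d - ρ i ∧ d - ρ i < n)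
    (hdiag : ∀ i, E (ρ i) (d - ρ i) ≠ 0) (hzero : ∀ u w, u + w < d → E u w = 0) :
    k ≤ (Matrix.of fun (u : Fin m) (w : Fin n) => E u w).rank := by
  let f (i : Fin k) : Fin m := ⟨(ρ i).toNat, by have := hrow i; omega⟩
  let g (i : Fin k) : Fin n := ⟨(d - ρ i).toNat, by have := hcol i; omega⟩
  have hf (i : Fin k) : ((f i : ℕ) : ℤ) = ρ i := Int.toNat_of_nonneg (hrow i).1
  have hg (i : Fin k) : ((g i : ℕ) : ℤ) = d - ρ i := Int.toNat_of_nonneg (hcol i).1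
  simpa using Matrix.card_le_rank_of_isLowerTriangular_submatrix _ f g
    (fun i j hij => by
      simp only [Matrix.submatrix_apply, Matrix.of_apply, hf, hg]
      exact hzero _ _ (by linarith [hρ (OrderDual.toDual_lt_toDual.mp hij)]))
    (fun i => by simpa only [Matrix.of_apply, hf, hg] using hdiag i)

end Rank

open Finsupp

section Stencil

variable {𝕜 : Type*}

/-- The `(u, w)` entry of `∑ C (i, j) • S_{i,j}`, where `S_{i,j}` has entries `1, a, 1` at
`(i - 1, j + 1), (i, j), (i + 1, j - 1)`. -/
def stencil [Semiring 𝕜] (a : 𝕜) (C : ℤ × ℤ →₀ 𝕜) (u w : ℤ) : 𝕜 :=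
  C (u + 1, w - 1) + a * C (u, w) + C (u - 1, w + 1)

def stencilMatrix [CommSemiring 𝕜] (m n : ℕ) (a : 𝕜) :
    (ℤ × ℤ →₀ 𝕜) →ₗ[𝕜] Matrix (Fin m) (Fin n) 𝕜 where
  toFun C := Matrix.of fun u w => stencil a C u w
  map_add' C D := by
    ext u w
    simp only [stencil, Matrix.of_apply, Matrix.add_apply, Finsupp.add_apply]
    ring
  map_smul' r C := by
    ext u w
    simp only [stencil, Matrix.of_apply, Matrix.smul_apply, Finsupp.smul_apply, smul_eq_mul,
      RingHom.id_apply]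
    ring

lemma stencil_eq_zero_of_add_lt [Semiring 𝕜] (a : 𝕜) {C : ℤ × ℤ →₀ 𝕜} {d u w : ℤ}
    (hd : ∀ p ∈ C.support, d ≤ p.1 + p.2) (huw : u + w < d) : stencil a C u w = 0 := by
  have hC (p : ℤ × ℤ) (hp : p.1 + p.2 < d) : C p = 0 :=
    Finsupp.notMem_support_iff.mp fun h => (hd p h).not_gt hp
  rw [stencil, hC _ (by simp only; omega), hC _ huw, hC _ (by simp only; omega)]
  simp

theorem exists_stencil_antidiagonal [NormedField 𝕜] {a : 𝕜} (ha : 2 ≤ ‖a‖)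
    {C : ℤ × ℤ →₀ 𝕜} (hC : C ≠ 0) :
    ∃ d s r e : ℤ, s ≤ r ∧ r ≤ e ∧ (s, d - s) ∈ C.support ∧ (e, d - e) ∈ C.support ∧
      stencil a C (s - 1) (d - (s - 1)) ≠ 0 ∧ stencil a C r (d - r) ≠ 0 ∧
      stencil a C (e + 1) (d - (e + 1)) ≠ 0 ∧ ∀ u w, u + w < d → stencil a C u w = 0 := by
  obtain ⟨p₀, hp₀, hd⟩ :=
    C.support.exists_min_image (fun p => p.1 + p.2) (Finsupp.support_nonempty_iff.mpr hC)
  set d := p₀.1 + p₀.2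
  set A := C.support.filter (fun p => p.1 + p.2 = d)
  have hA : A.Nonempty := ⟨p₀, Finset.mem_filter.mpr ⟨hp₀, rfl⟩⟩
  obtain ⟨⟨s, s'⟩, hsA, hs⟩ := A.exists_min_image Prod.fst hA
  obtain ⟨⟨e, e'⟩, heA, he⟩ := A.exists_max_image Prod.fst hA
  rw [Finset.mem_filter] at hsA heA
  obtain rfl : s' = d - s := by simp only at hsA; omega
  obtain rfl : e' = d - e := by simp only at heA; omega
  set t : ℤ → 𝕜 := fun k => C (k, d - k)
  have ht (k : ℤ) (hk : t k ≠ 0) : s ≤ k ∧ k ≤ e := by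
    have hkA : (k, d - k) ∈ A := Finset.mem_filter.mpr ⟨Finsupp.mem_support_iff.mpr hk, by simp⟩
    exact ⟨hs _ hkA, he _ hkA⟩
  have htlow (k : ℤ) (hk : k < s) : t k = 0 := by by_contra h; linarith [(ht k h).1]
  have hthigh (k : ℤ) (hk : e < k) : t k = 0 := by by_contra h; linarith [(ht k h).2]
  have hstencil (u : ℤ) : stencil a C u (d - u) = t (u + 1) + a • t u + t (u - 1) := by
    rw [stencil, smul_eq_mul, show d - u - 1 = d - (u + 1) by ring,
      show d - u + 1 = d - (u - 1) by ring]
  have hse : s ≤ e := (ht s (Finsupp.mem_support_iff.mp hsA.1)).2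
  obtain ⟨r, hsr, hre, hr⟩ := exists_add_smul_add_ne_zero ha hse (htlow _ (by omega))
    (Finsupp.mem_support_iff.mp hsA.1) (hthigh _ (by omega))
  refine ⟨d, s, r, e, hsr, hre, hsA.1, heA.1, ?_, hstencil r ▸ hr, ?_,
    fun _ _ => stencil_eq_zero_of_add_lt a hd⟩
  · rw [hstencil, sub_add_cancel, htlow (s - 1) (by omega), htlow (s - 1 - 1) (by omega)]
    simpa using Finsupp.mem_support_iff.mp hsA.1
  · rw [hstencil, add_sub_cancel_right, hthigh (e + 1 + 1) (by omega), hthigh (e + 1) (by omega)]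
    simpa using Finsupp.mem_support_iff.mp heA.1

end Stencil

def interiorIndices (m n : ℕ) : Set (ℤ × ℤ) :=
  Set.Icc 1 ((m : ℤ) - 2) ×ˢ Set.Icc 1 ((n : ℤ) - 2)

section Interior

variable {𝕜 : Type*} [NormedField 𝕜] {m n : ℕ} {a : 𝕜}

theorem three_le_rank_stencilMatrix (ha : 2 ≤ ‖a‖) {C : ℤ × ℤ →₀ 𝕜}
    (hC : C ∈ supported 𝕜 𝕜 (interiorIndices m n)) (hC₀ : C ≠ 0) :
    3 ≤ (stencilMatrix m n a C).rank := by
  obtain ⟨d, s, r, e, hsr, hre, hs, he, h₁, h₂, h₃, hzero⟩ := exists_stencil_antidiagonal ha hC₀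
  obtain ⟨⟨hs₁, hs₂⟩, hs₃, hs₄⟩ := (mem_supported _ _).mp hC hs
  obtain ⟨⟨he₁, he₂⟩, he₃, he₄⟩ := (mem_supported _ _).mp hC he
  refine Matrix.le_rank_of_antidiagonal (ρ := ![s - 1, r, e + 1]) ?_ ?_ ?_ ?_ hzero
  · refine Fin.strictMono_iff_lt_succ.mpr fun i => ?_
    fin_cases i <;> simp only [Fin.castSucc_zero, Fin.succ_zero_eq_one, Fin.castSucc_one,
      Fin.succ_one_eq_two, Fin.reduceFinMk, Fin.isValue, Matrix.cons_val] <;> omega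
  all_goals intro i; fin_cases i <;> simp only [Fin.reduceFinMk, Matrix.cons_val]
  all_goals first | assumption | omega

theorem eq_zero_of_stencilMatrix_eq_zero (ha : 2 ≤ ‖a‖) {C : ℤ × ℤ →₀ 𝕜}
    (hC : C ∈ supported 𝕜 𝕜 (interiorIndices m n)) (h : stencilMatrix m n a C = 0) : C = 0 := by
  by_contra hC₀
  simpa [h] using three_le_rank_stencilMatrix ha hC hC₀

theorem finrank_map_stencilMatrix (ha : 2 ≤ ‖a‖) :
    Module.finrank 𝕜 ((supported 𝕜 𝕜 (interiorIndices m n)).map (stencilMatrix m n a)) =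
      (m - 2) * (n - 2) := by
  have hinj : Function.Injective
      (stencilMatrix m n a ∘ₗ (supported 𝕜 𝕜 (interiorIndices m n)).subtype) := by
    refine (injective_iff_map_eq_zero _).mpr fun C hC => ?_
    exact Subtype.ext (eq_zero_of_stencilMatrix_eq_zero ha C.2 hC)
  rw [← Submodule.range_subtype (supported 𝕜 𝕜 _), ← LinearMap.range_comp,
    LinearMap.finrank_range_of_inj hinj, (supportedEquivFinsupp _).finrank_eq, interiorIndices,
    Module.finrank_finsupp_self, ← Nat.card_eq_fintype_card, Nat.card_congr (Equiv.Set.prod _ _),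
    Nat.card_prod]
  simp only [Nat.card_eq_fintype_card, Fintype.card_ofFinset, Int.card_Icc, add_sub_cancel_right]
  congr 1 <;> omega

end Interior

lemma stencilMatrix_single {m n i j : ℕ} (hi : 1 ≤ i) (hj : 1 ≤ j) (a : ℝ) :
    stencilMatrix m n (a : ℂ) (single ((i : ℤ), (j : ℤ)) 1) = Sgen m n a i j := by
  ext u w
  simp only [stencilMatrix, stencil, LinearMap.coe_mk, AddHom.coe_mk, Matrix.of_apply, Sgen,
    single_apply, Prod.mk.injEq]
  split_ifs <;> first | omega | simp

lemma span_sgen_eq_map_supported (m n : ℕ) (a : ℝ) :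
    Submodule.span ℂ {M : Matrix (Fin m) (Fin n) ℂ |
        ∃ i j : ℕ, 1 ≤ i ∧ i ≤ m - 2 ∧ 1 ≤ j ∧ j ≤ n - 2 ∧ M = Sgen m n a i j} =
      (supported ℂ ℂ (interiorIndices m n)).map (stencilMatrix m n (a : ℂ)) := by
  rw [supported_eq_span_single, Submodule.map_span, Set.image_image]
  congr 1
  ext M
  constructor
  · rintro ⟨i, j, hi₁, hi₂, hj₁, hj₂, rfl⟩
    exact ⟨(i, j), ⟨⟨by omega, by omega⟩, by omega, by omega⟩, stencilMatrix_single hi₁ hj₁ a⟩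
  · rintro ⟨⟨i, j⟩, ⟨⟨hi₁, hi₂⟩, hj₁, hj₂⟩, rfl⟩
    lift i to ℕ using by omega
    lift j to ℕ using by omega
    exact ⟨i, j, by omega, by omega, by omega, by omega,
      stencilMatrix_single (by omega) (by omega) a⟩

theorem stmt17_general (m n : ℕ) (a : ℝ) (ha : 2 ≤ |a|) :
    (∀ M ∈ Submodule.span ℂ {M : Matrix (Fin m) (Fin n) ℂ |
        ∃ i j : ℕ, 1 ≤ i ∧ i ≤ m - 2 ∧ 1 ≤ j ∧ j ≤ n - 2 ∧ M = Sgen m n a i j},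
      M ≠ 0 → 3 ≤ M.rank) ∧
    Module.finrank ℂ (Submodule.span ℂ {M : Matrix (Fin m) (Fin n) ℂ |
        ∃ i j : ℕ, 1 ≤ i ∧ i ≤ m - 2 ∧ 1 ≤ j ∧ j ≤ n - 2 ∧ M = Sgen m n a i j}) =
      (m - 2) * (n - 2) := by
  have ha' : 2 ≤ ‖(a : ℂ)‖ := by rwa [Complex.norm_real, Real.norm_eq_abs]
  rw [span_sgen_eq_map_supported]
  refine ⟨?_, finrank_map_stencilMatrix ha'⟩
  rintro _ ⟨C, hC, rfl⟩ hM
  exact three_le_rank_stencilMatrix ha' hC fun h => hM (by rw [h, map_zero])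

theorem stmt17 (m n : ℕ) (hm : 4 ≤ m) (hn : 4 ≤ n) (a : ℝ) (ha : 2 ≤ |a|) :
    (∀ M ∈ Submodule.span ℂ {M : Matrix (Fin m) (Fin n) ℂ |
        ∃ i j : ℕ, 1 ≤ i ∧ i ≤ m - 2 ∧ 1 ≤ j ∧ j ≤ n - 2 ∧ M = Sgen m n a i j},
      M ≠ 0 → 3 ≤ M.rank) ∧
    Module.finrank ℂ (Submodule.span ℂ {M : Matrix (Fin m) (Fin n) ℂ |
        ∃ i j : ℕ, 1 ≤ i ∧ i ≤ m - 2 ∧ 1 ≤ j ∧ j ≤ n - 2 ∧ M = Sgen m n a i j}) =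
      (m - 2) * (n - 2) :=
  stmt17_general m n a ha
end

section
/- Let m, n be natural numbers with m ≥ 4 and n ≥ 4, and let a be a real number with a > 4. Let 𝒯 ⊆ M_{m×n}(ℂ) be the complex linear span of the matrices T_{i,j}, for 2 ≤ i ≤ m−2 and 2 ≤ j ≤ n−2, where T_{i,j} has only nonzero entries: (i−2, j+1) ↦ 1, (i−1, j) ↦ a+1, (i, j−1) ↦ a+1, (i+1, j−2) ↦ 1, and let 𝒮 ⊆ M_{m×n}(ℂ) be the complex linear span of the matrices S_{i,j}, for 1 ≤ i ≤ m−2 and 1 ≤ j ≤ n−2, where S_{i,j} has only nonzero entries: (i−1, j+1) ↦ 1, (i, j) ↦ a, (i+1, j−1) ↦ 1. Then there exists a matrix M ∈ 𝒮 with M ∉ 𝒯 such that M has rank exactly 3. -/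
/-- The generator matrix `T_{i,j}` (rows indexed `0,…,m-1`, columns `0,…,n-1`):
its only nonzero entries are `(i-2, j+1) ↦ 1`, `(i-1, j) ↦ a+1`, `(i, j-1) ↦ a+1`,
`(i+1, j-2) ↦ 1`. -/
def Tgen (m n : ℕ) (a : ℝ) (i j : ℕ) : Matrix (Fin m) (Fin n) ℂ :=
  Matrix.of fun r c =>
    if (r : ℕ) = i - 2 ∧ (c : ℕ) = j + 1 then 1
    else if (r : ℕ) = i - 1 ∧ (c : ℕ) = j then (a : ℂ) + 1
    else if (r : ℕ) = i ∧ (c : ℕ) = j - 1 then (a : ℂ) + 1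
    else if (r : ℕ) = i + 1 ∧ (c : ℕ) = j - 2 then 1
    else 0

/-!
Witness: `S_{1,1}`. Each `T_{i,j}` with `i, j ≥ 2` is supported on the antidiagonal
`r + c = i + j - 1 ≥ 3`, so every matrix in the span of the `T_{i,j}` vanishes at `(1, 1)`, where
`S_{1,1}` has the entry `a ≠ 0`. A matrix `S_{i,j}` has only three nonzero rows, and on rows
`i-1, i, i+1` and columns `j-1, j, j+1` it is antidiagonal with determinant `-a`, so its rank is 3.
-/

lemma Tgen_apply_eq_zero_of_add_ne {m n : ℕ} {a : ℝ} {i j : ℕ} (hi : 2 ≤ i) (hj : 2 ≤ j)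
    {r : Fin m} {c : Fin n} (h : (r : ℕ) + c ≠ i + j - 1) : Tgen m n a i j r c = 0 := by
  simp only [Tgen, Matrix.of_apply]
  split_ifs <;> first | rfl | omega

lemma span_Tgen_le_ker_entryLinearMap {m n : ℕ} (a : ℝ) {s : Set (Matrix (Fin m) (Fin n) ℂ)}
    (hs : ∀ M ∈ s, ∃ i j : ℕ, 2 ≤ i ∧ 2 ≤ j ∧ M = Tgen m n a i j) {r : Fin m} {c : Fin n}
    (h : (r : ℕ) + c < 3) :
    Submodule.span ℂ s ≤ LinearMap.ker (Matrix.entryLinearMap ℂ ℂ r c) := by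
  rw [Submodule.span_le]
  intro M hM
  obtain ⟨i, j, hi, hj, rfl⟩ := hs M hM
  exact Tgen_apply_eq_zero_of_add_ne hi hj (by omega)

lemma rank_Sgen_le_three {m n : ℕ} (a : ℝ) {i j : ℕ} (him : i + 1 < m) :
    (Sgen m n a i j).rank ≤ 3 := by
  refine (Matrix.rank_le_card_of_support_subset _
    {⟨i - 1, by omega⟩, ⟨i, by omega⟩, ⟨i + 1, him⟩} ?_).trans Finset.card_le_three
  intro r hr
  by_contra hs
  simp only [Finset.coe_insert, Finset.coe_singleton, Set.mem_insert_iff,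
    Set.mem_singleton_iff, Fin.ext_iff] at hs
  refine hr (funext fun c => ?_)
  simp only [Matrix.row, Sgen, Matrix.of_apply, Pi.zero_apply]
  split_ifs <;> first | rfl | omega

lemma det_submatrix_Sgen {m n : ℕ} (a : ℝ) {i j : ℕ} (hi : 1 ≤ i) (hj : 1 ≤ j)
    {f : Fin 3 → Fin m} (hf : ∀ k, (f k : ℕ) = i - 1 + k)
    {g : Fin 3 → Fin n} (hg : ∀ k, (g k : ℕ) = j - 1 + k) :
    ((Sgen m n a i j).submatrix f g).det = -a := by
  rw [Matrix.det_fin_three]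
  simp only [Matrix.submatrix_apply, Sgen, Matrix.of_apply, hf, hg,
    Fin.val_zero, Fin.val_one, Fin.val_two]
  simp (disch := omega) only [if_pos, if_neg]
  ring

lemma three_le_rank_Sgen {m n : ℕ} {a : ℝ} (ha : a ≠ 0) {i j : ℕ} (hi : 1 ≤ i)
    (him : i + 1 < m) (hj : 1 ≤ j) (hjn : j + 1 < n) : 3 ≤ (Sgen m n a i j).rank := by
  let f : Fin 3 → Fin m := fun k => ⟨i - 1 + k, by omega⟩
  let g : Fin 3 → Fin n := fun k => ⟨j - 1 + k, by omega⟩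
  have hdet : ((Sgen m n a i j).submatrix f g).det ≠ 0 := by
    rw [det_submatrix_Sgen a hi hj (fun _ => rfl) (fun _ => rfl)]
    exact neg_ne_zero.mpr (Complex.ofReal_ne_zero.mpr ha)
  calc 3 = ((Sgen m n a i j).submatrix f g).rank := by
        rw [Matrix.rank_of_det_ne_zero hdet, Fintype.card_fin]
    _ ≤ (Sgen m n a i j).rank := Matrix.rank_submatrix_le _ _ _

lemma rank_Sgen {m n : ℕ} {a : ℝ} (ha : a ≠ 0) {i j : ℕ} (hi : 1 ≤ i) (him : i + 1 < m)
    (hj : 1 ≤ j) (hjn : j + 1 < n) : (Sgen m n a i j).rank = 3 :=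
  (rank_Sgen_le_three a him).antisymm (three_le_rank_Sgen ha hi him hj hjn)

theorem stmt19 (m n : ℕ) (hm : 4 ≤ m) (hn : 4 ≤ n) (a : ℝ) (ha : 4 < a) :
    ∃ M ∈ Submodule.span ℂ {M : Matrix (Fin m) (Fin n) ℂ |
        ∃ i j : ℕ, 1 ≤ i ∧ i ≤ m - 2 ∧ 1 ≤ j ∧ j ≤ n - 2 ∧ M = Sgen m n a i j},
      M ∉ Submodule.span ℂ {M : Matrix (Fin m) (Fin n) ℂ |
        ∃ i j : ℕ, 2 ≤ i ∧ i ≤ m - 2 ∧ 2 ≤ j ∧ j ≤ n - 2 ∧ M = Tgen m n a i j} ∧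
      M.rank = 3 := by
  have ha0 : a ≠ 0 := by positivity
  refine ⟨Sgen m n a 1 1, Submodule.subset_span ⟨1, 1, le_rfl, by omega, le_rfl, by omega, rfl⟩,
    fun hT => ?_, rank_Sgen ha0 le_rfl (by omega) le_rfl (by omega)⟩
  have h11 := span_Tgen_le_ker_entryLinearMap a ?_ (r := ⟨1, by omega⟩) (c := ⟨1, by omega⟩)
    (by norm_num) hT
  · simp [Sgen, ha0] at h11
  · rintro _ ⟨i, j, hi, -, hj, -, rfl⟩
    exact ⟨i, j, hi, hj, rfl⟩
end
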